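/- arXiv:2009.03472 — 2 statements merged into one kernel-verified Lean document; each statement's English description precedes it below -/
import Mathlib

section
/- Let γ > 0, let g : ℝ → [0,∞) be integrable with ∫_ℝ g(x) dx = 1, let A = {x ∈ ℝ : g(x) ≥ γ}, and let f : ℝ → ℝ be measurable with ε := sup_{x∈ℝ} |g(x) − f(x)| < ∞. Then | ∫_A (g(x) − f(x)) log g(x) dx | ≤ (1 + 1/γ²) · ε. -/
/-!
Since `-z⁻¹ ≤ log z ≤ z`, we have `|log z| ≤ z + z⁻¹`, and on `A` the term `z⁻¹` is at most
`z / γ²`. Hence `|(g - f) log g| ≤ (1 + 1/γ²) ε g` on `A`, and integrating this bound over `A`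
costs at most `∫ g = 1`.
-/

open MeasureTheory

namespace Real

lemma abs_log_le_self_add_inv {z : ℝ} (hz : 0 ≤ z) : |log z| ≤ z + z⁻¹ :=
  abs_le.mpr ⟨by linarith [neg_inv_le_log hz, inv_nonneg.mpr hz],
    by linarith [log_le_self hz, inv_nonneg.mpr hz]⟩

lemma abs_log_le_mul_self_of_le {γ z : ℝ} (hγ : 0 < γ) (hz : γ ≤ z) :
    |log z| ≤ (1 + 1 / γ ^ 2) * z := by
  have hz0 : 0 < z := hγ.trans_le hz
  have hinv : z⁻¹ ≤ z / γ ^ 2 := by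
    rw [inv_le_iff_one_le_mul₀ hz0, div_mul_eq_mul_div, le_div_iff₀ (by positivity), one_mul, ← sq]
    exact pow_le_pow_left₀ hγ.le hz 2
  calc |log z| ≤ z + z⁻¹ := abs_log_le_self_add_inv hz0.le
    _ ≤ z + z / γ ^ 2 := by gcongr
    _ = (1 + 1 / γ ^ 2) * z := by ring

end Real

lemma abs_setIntegral_le_mul_integral_of_abs_le {α : Type*} [MeasurableSpace α] {μ : Measure α}
    {s : Set α} (hs : NullMeasurableSet s μ) {F g : α → ℝ} (hg : Integrable g μ)
    (hg_nonneg : 0 ≤ᵐ[μ] g) {c : ℝ} (hc : 0 ≤ c) (hF : ∀ x ∈ s, |F x| ≤ c * g x) :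
    |∫ x in s, F x ∂μ| ≤ c * ∫ x, g x ∂μ :=
  calc |∫ x in s, F x ∂μ| ≤ ∫ x in s, c * g x ∂μ :=
        norm_integral_le_of_norm_le (hg.const_mul c).restrict <| by
          filter_upwards [ae_restrict_mem₀ hs] with x hx
          exact (Real.norm_eq_abs _).trans_le (hF x hx)
    _ = c * ∫ x in s, g x ∂μ := integral_const_mul c g
    _ ≤ c * ∫ x, g x ∂μ :=
        mul_le_mul_of_nonneg_left (setIntegral_le_integral hg hg_nonneg) hc

theorem integral_diff_log_bound_general
    (γ : ℝ) (hγ : 0 < γ) (g : ℝ → ℝ)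
    (hg_nonneg : ∀ x, 0 ≤ g x) (hg_int : Integrable g)
    (hg_one : ∫ x, g x = 1)
    (f : ℝ → ℝ)
    (ε : ℝ) (hε : ∀ x, |g x - f x| ≤ ε) :
    |∫ x in {x : ℝ | γ ≤ g x}, (g x - f x) * Real.log (g x)| ≤ (1 + 1 / γ ^ 2) * ε := by
  have hε0 : 0 ≤ ε := (abs_nonneg _).trans (hε 0)
  have hA : NullMeasurableSet {x : ℝ | γ ≤ g x} :=
    nullMeasurableSet_le aemeasurable_const hg_int.aemeasurable
  have hbound : ∀ x ∈ {x : ℝ | γ ≤ g x},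
      |(g x - f x) * Real.log (g x)| ≤ ((1 + 1 / γ ^ 2) * ε) * g x := fun x hx =>
    calc |(g x - f x) * Real.log (g x)| ≤ ε * ((1 + 1 / γ ^ 2) * g x) := by
          rw [abs_mul]
          exact mul_le_mul (hε x) (Real.abs_log_le_mul_self_of_le hγ hx) (abs_nonneg _) hε0
      _ = ((1 + 1 / γ ^ 2) * ε) * g x := by ring
  simpa [hg_one] using abs_setIntegral_le_mul_integral_of_abs_le hA hg_int
    (Filter.Eventually.of_forall hg_nonneg) (by positivity) hbound

/-- If `g` is a probability density, `A = {x : g x ≥ γ}` its super-level set at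
height `γ > 0`, and `|g - f| ≤ ε` uniformly on `ℝ`, then
`|∫_A (g - f) log g| ≤ (1 + 1/γ²) ε`. -/
theorem integral_diff_log_bound
    (γ : ℝ) (hγ : 0 < γ) (g : ℝ → ℝ) (hg_meas : Measurable g)
    (hg_nonneg : ∀ x, 0 ≤ g x) (hg_int : Integrable g)
    (hg_one : ∫ x, g x = 1)
    (f : ℝ → ℝ) (hf_meas : Measurable f)
    (ε : ℝ) (hε : ∀ x, |g x - f x| ≤ ε) :
    |∫ x in {x : ℝ | γ ≤ g x}, (g x - f x) * Real.log (g x)| ≤ (1 + 1 / γ ^ 2) * ε :=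
  integral_diff_log_bound_general γ hγ g hg_nonneg hg_int hg_one f ε hε
end

section
/- Let γ > 0 and let f, g : ℝ → [0,∞) be integrable with ∫_ℝ f = ∫_ℝ g = 1. Let A = {x ∈ ℝ : g(x) ≥ γ}, assume f(x) > 0 for all x ∈ A, and assume ε := sup_{x∈ℝ} |g(x) − f(x)| ≤ γ/2. Then | (−∫_A g(x) log g(x) dx) − (−∫_A f(x) log f(x) dx) | ≤ (1/γ² + 3/γ + 1) · ε. -/
/-!
On `A = {g ≥ γ}` both densities are at least `γ / 2`, so `x ↦ x log x` can be compared pointwise: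
`g log g - f log f = (g - f) log g + f (log g - log f)`, where `|log g| ≤ 1/g + g ≤ (1/γ² + 1) g`
and `log` is `2/γ`-Lipschitz on `[γ/2, ∞)`. The resulting majorant is a combination of `f` and `g`,
whose integrals over `A` are at most `1`.
-/

open MeasureTheory

namespace Real

theorem abs_log_le_inv_add_self {x : ℝ} (hx : 0 < x) : |log x| ≤ x⁻¹ + x := by
  have hinv : 0 < x⁻¹ := inv_pos.2 hx
  have hlog_inv : log x⁻¹ ≤ x⁻¹ - 1 := log_le_sub_one_of_pos hinv
  have hlog : log x ≤ x - 1 := log_le_sub_one_of_pos hx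
  rw [log_inv] at hlog_inv
  rw [abs_le]
  constructor <;> linarith

theorem log_sub_log_le_abs_sub_div {a b m : ℝ} (hm : 0 < m) (ha : 0 < a) (hb : m ≤ b) :
    log a - log b ≤ |a - b| / m := by
  have hb₀ : 0 < b := hm.trans_le hb
  calc log a - log b = log (a / b) := (log_div ha.ne' hb₀.ne').symm
    _ ≤ a / b - 1 := log_le_sub_one_of_pos (div_pos ha hb₀)
    _ = (a - b) / b := by field_simp
    _ ≤ |a - b| / b := by gcongr; exact le_abs_self _
    _ ≤ |a - b| / m := by gcongr

theorem abs_log_sub_log_le_abs_sub_div {a b m : ℝ} (hm : 0 < m) (ha : m ≤ a) (hb : m ≤ b) :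
    |log a - log b| ≤ |a - b| / m := by
  have hba := log_sub_log_le_abs_sub_div hm (hm.trans_le hb) ha
  rw [abs_sub_comm] at hba
  rw [abs_le]
  constructor
  · linarith
  · exact log_sub_log_le_abs_sub_div hm (hm.trans_le ha) hb

theorem abs_mul_log_sub_mul_log_le {γ ε a b : ℝ} (hγ : 0 < γ) (hε : ε ≤ γ / 2) (hb : γ ≤ b)
    (hab : |b - a| ≤ ε) :
    |b * log b - a * log a| ≤ ε * (1 / γ ^ 2 + 1) * b + 2 * ε / γ * a := by
  have hb₀ : 0 < b := hγ.trans_le hb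
  have ha : γ / 2 ≤ a := by linarith [(abs_le.1 hab).2]
  have ha₀ : 0 < a := by linarith
  have hinv : b⁻¹ ≤ b / γ ^ 2 := by
    rw [inv_eq_one_div, div_le_div_iff₀ hb₀ (by positivity)]
    nlinarith
  have hlog_b : |log b| ≤ (1 / γ ^ 2 + 1) * b := by
    linarith [abs_log_le_inv_add_self hb₀, show (1 / γ ^ 2 + 1) * b = b / γ ^ 2 + b by ring]
  have hlog_diff : |log b - log a| ≤ 2 * ε / γ := by
    calc |log b - log a| ≤ |b - a| / (γ / 2) :=
          abs_log_sub_log_le_abs_sub_div (by positivity) (by linarith) ha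
      _ ≤ ε / (γ / 2) := by gcongr
      _ = 2 * ε / γ := by field_simp
  calc |b * log b - a * log a| = |(b - a) * log b + a * (log b - log a)| := by congr 1; ring
    _ ≤ |(b - a) * log b| + |a * (log b - log a)| := abs_add_le _ _
    _ = |b - a| * |log b| + a * |log b - log a| := by rw [abs_mul, abs_mul, abs_of_pos ha₀]
    _ ≤ ε * ((1 / γ ^ 2 + 1) * b) + a * (2 * ε / γ) := by
        gcongr
        exact (abs_nonneg _).trans hab
    _ = ε * (1 / γ ^ 2 + 1) * b + 2 * ε / γ * a := by ring

end Real

/-- No integrability of `F` or `G` is assumed: if one of them is not integrable, neither is,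
both integrals are `0` by convention, and the bound holds because `M ≥ 0`. -/
theorem abs_integral_sub_integral_le_of_abs_sub_le {α : Type*} [MeasurableSpace α]
    {μ : Measure α} {F G M : α → ℝ} (hF : AEStronglyMeasurable F μ)
    (hG : AEStronglyMeasurable G μ) (hM : Integrable M μ) (hFG : ∀ᵐ x ∂μ, |F x - G x| ≤ M x) :
    |∫ x, F x ∂μ - ∫ x, G x ∂μ| ≤ ∫ x, M x ∂μ := by
  have hdiff : Integrable (F - G) μ := hM.mono' (hF.sub hG) hFG
  by_cases hFi : Integrable F μ
  · have hGi : Integrable G μ := by simpa using hFi.sub hdiff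
    rw [← integral_sub hFi hGi, ← Real.norm_eq_abs]
    exact norm_integral_le_of_norm_le hM hFG
  · have hGi : ¬ Integrable G μ := fun hGi => hFi (by simpa using hGi.add hdiff)
    rw [integral_undef hFi, integral_undef hGi, sub_zero, abs_zero]
    refine integral_nonneg_of_ae ?_
    filter_upwards [hFG] with x hx using (abs_nonneg _).trans hx

theorem entropy_integral_diff_bound_general
    (γ : ℝ) (hγ : 0 < γ) (f g : ℝ → ℝ)
    (hf_nonneg : ∀ x, 0 ≤ f x) (hg_nonneg : ∀ x, 0 ≤ g x)
    (hf_int : Integrable f) (hg_int : Integrable g)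
    (hf_one : ∫ x, f x = 1) (hg_one : ∫ x, g x = 1)
    (ε : ℝ) (hε_nonneg : 0 ≤ ε) (hε_le : ε ≤ γ / 2)
    (hε : ∀ x, |g x - f x| ≤ ε) :
    |(-∫ x in {x : ℝ | γ ≤ g x}, g x * Real.log (g x)) -
      (-∫ x in {x : ℝ | γ ≤ g x}, f x * Real.log (f x))| ≤
      (1 / γ ^ 2 + 3 / γ + 1) * ε := by
  set A : Set ℝ := {x : ℝ | γ ≤ g x}
  have hA : NullMeasurableSet A := aestronglyMeasurable_const.nullMeasurableSet_le hg_int.1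
  have hmul_log_meas {h : ℝ → ℝ} (hh : Integrable h) :
      AEStronglyMeasurable (fun x => h x * Real.log (h x)) (volume.restrict A) :=
    (hh.aemeasurable.mul hh.aemeasurable.log).aestronglyMeasurable.restrict
  have hpointwise : ∀ᵐ x ∂volume.restrict A, |g x * Real.log (g x) - f x * Real.log (f x)| ≤
      ε * (1 / γ ^ 2 + 1) * g x + 2 * ε / γ * f x :=
    (ae_restrict_mem₀ hA).mono fun x hx => Real.abs_mul_log_sub_mul_log_le hγ hε_le hx (hε x)
  have hfA : ∫ x in A, f x ≤ 1 := hf_one ▸ setIntegral_le_integral hf_int (ae_of_all _ hf_nonneg)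
  have hgA : ∫ x in A, g x ≤ 1 := hg_one ▸ setIntegral_le_integral hg_int (ae_of_all _ hg_nonneg)
  rw [neg_sub_neg, abs_sub_comm]
  calc _ ≤ ∫ x in A, (ε * (1 / γ ^ 2 + 1) * g x + 2 * ε / γ * f x) :=
        abs_integral_sub_integral_le_of_abs_sub_le (hmul_log_meas hg_int) (hmul_log_meas hf_int)
          ((hg_int.const_mul _).add (hf_int.const_mul _)).restrict hpointwise
    _ = ε * (1 / γ ^ 2 + 1) * (∫ x in A, g x) + 2 * ε / γ * ∫ x in A, f x := by
        rw [integral_add (hg_int.const_mul _).integrableOn (hf_int.const_mul _).integrableOn,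
          integral_const_mul, integral_const_mul]
    _ ≤ ε * (1 / γ ^ 2 + 1) * 1 + 2 * ε / γ * 1 := by gcongr
    _ = (1 / γ ^ 2 + 2 / γ + 1) * ε := by ring
    _ ≤ (1 / γ ^ 2 + 3 / γ + 1) * ε := by gcongr; norm_num

/-- Key deterministic inequality: if `f, g` are probability densities,
`A = {x : g x ≥ γ}` with `γ > 0`, `f > 0` on `A`, and
`ε := sup_x |g x - f x| ≤ γ/2`, then
`|(-∫_A g log g) - (-∫_A f log f)| ≤ (1/γ² + 3/γ + 1) ε`. -/
theorem entropy_integral_diff_bound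
    (γ : ℝ) (hγ : 0 < γ) (f g : ℝ → ℝ)
    (hf_meas : Measurable f) (hg_meas : Measurable g)
    (hf_nonneg : ∀ x, 0 ≤ f x) (hg_nonneg : ∀ x, 0 ≤ g x)
    (hf_int : Integrable f) (hg_int : Integrable g)
    (hf_one : ∫ x, f x = 1) (hg_one : ∫ x, g x = 1)
    (hf_pos : ∀ x ∈ {x : ℝ | γ ≤ g x}, 0 < f x)
    (ε : ℝ) (hε_nonneg : 0 ≤ ε) (hε_le : ε ≤ γ / 2)
    (hε : ∀ x, |g x - f x| ≤ ε) :
    |(-∫ x in {x : ℝ | γ ≤ g x}, g x * Real.log (g x)) -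
      (-∫ x in {x : ℝ | γ ≤ g x}, f x * Real.log (f x))| ≤
      (1 / γ ^ 2 + 3 / γ + 1) * ε :=
  entropy_integral_diff_bound_general γ hγ f g hf_nonneg hg_nonneg hf_int hg_int hf_one hg_one ε
    hε_nonneg hε_le hε
end
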